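/- arXiv:2409.01431 — 2 statements merged into one kernel-verified Lean document; each statement's English description precedes it below -/
import Mathlib

section
/- Let ℓ ≥ r ≥ 1 and k ≥ 1 be integers. Then for all real x > 2, Φ(C(ℓ+1, r−1, k), x) > Φ(C(ℓ, r, k), x), where C(ℓ,r,k) is the caterpillar obtained by attaching k leaves at the ℓ-th vertex of a path on ℓ+r+1 vertices. -/
open Classical
attribute [local instance] Classical.propDecidable

noncomputable section

/-- The list of eigenvalues of the adjacency matrix of `G` (with multiplicity),
sorted in ascending order. -/
def eigList {V : Type*} [Fintype V] [DecidableEq V] (G : SimpleGraph V) : List ℝ :=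
  (Finset.univ.val.map (Matrix.IsHermitian.eigenvalues
    (by
      rw [Matrix.IsHermitian]
      ext i j
      simp [Matrix.conjTranspose_apply, G.adj_comm j i] : (G.adjMatrix ℝ).IsHermitian))).sort (· ≤ ·)

/-- `lam G k` is the `k`-th largest eigenvalue (1-indexed, with multiplicity)
of the adjacency matrix of `G`; so `lam G 1 = λ₁(G)`, `lam G 2 = λ₂(G)`, etc. -/
def lam {V : Type*} [Fintype V] [DecidableEq V] (G : SimpleGraph V) (k : ℕ) : ℝ :=
  (eigList G).getD (Fintype.card V - k) 0

/-- `Phi G x = det (x I - A(G))`: the characteristic polynomial of the adjacency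
matrix of `G`, evaluated at `x`. -/
def Phi {V : Type*} [Fintype V] [DecidableEq V] (G : SimpleGraph V) (x : ℝ) : ℝ :=
  ((G.adjMatrix ℝ).charpoly).eval x

/-- The graph `G - a` obtained by deleting the vertex `a`. -/
def delVert {V : Type*} (G : SimpleGraph V) (a : V) : SimpleGraph {v : V // v ≠ a} :=
  G.induce {v : V | v ≠ a}

/-- The path graph `P_m` on `m` vertices `0 - 1 - ⋯ - (m-1)`. -/
def pathG (m : ℕ) : SimpleGraph (Fin m) :=
  SimpleGraph.fromRel (fun i j => i.val + 1 = j.val)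

/-- The caterpillar `C(ℓ,r,k)`: the path `v_0 v_1 ⋯ v_{ℓ+r}` together with `k`
pendant leaves attached at the vertex `v_ℓ`. -/
def caterpillar (l r k : ℕ) : SimpleGraph (Fin (l + r + k + 1)) :=
  SimpleGraph.fromRel (fun i j =>
    (i.val + 1 = j.val ∧ j.val ≤ l + r) ∨ (i.val = l ∧ l + r < j.val))

/-- The star `K_{1,n-1}`: vertex `0` adjacent to all other vertices. -/
def starG (n : ℕ) : SimpleGraph (Fin n) :=
  SimpleGraph.fromRel (fun i _ => i.val = 0)

/-- The double star `T(n-3,1)`: adjacent vertices `u = 0`, `v = 1`, where `u` has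
the `n - 3` pendant leaves `2, …, n-2` and `v` has the single pendant leaf `n-1`. -/
def doubleStar (n : ℕ) : SimpleGraph (Fin n) :=
  SimpleGraph.fromRel (fun i j =>
    (i.val = 0 ∧ 1 ≤ j.val ∧ j.val ≤ n - 2) ∨ (i.val = 1 ∧ j.val = n - 1))

/-- The caterpillar `T((n-3)/2, 0, (n-3)/2)`: a path `0 - 1 - 2` with `(n-3)/2`
pendant leaves attached at `0` and `(n-3)/2` pendant leaves attached at `2`. -/
def doubleBroom (n : ℕ) : SimpleGraph (Fin n) :=
  SimpleGraph.fromRel (fun i j =>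
    (i.val = 0 ∧ j.val = 1) ∨ (i.val = 1 ∧ j.val = 2) ∨
    (i.val = 0 ∧ 3 ≤ j.val ∧ j.val < 3 + (n - 3) / 2) ∨
    (i.val = 2 ∧ 3 + (n - 3) / 2 ≤ j.val))

/-- `(G1,a) ∘ (G2,b)`: the disjoint union of `G1` and `G2` together with the edge `ab`. -/
def connectRoots {V1 V2 : Type*} (G1 : SimpleGraph V1) (G2 : SimpleGraph V2) (a : V1) (b : V2) :
    SimpleGraph (V1 ⊕ V2) where
  Adj x y := match x, y with
    | .inl u, .inl v => G1.Adj u v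
    | .inr u, .inr v => G2.Adj u v
    | .inl u, .inr v => u = a ∧ v = b
    | .inr u, .inl v => u = b ∧ v = a
  symm := by
    constructor
    rintro (u | u) (v | v) h
    · exact G1.adj_symm h
    · exact ⟨h.2, h.1⟩
    · exact ⟨h.2, h.1⟩
    · exact G2.adj_symm h
  loopless := by
    constructor
    rintro (u | u) h
    · exact G1.irrefl h
    · exact G2.irrefl h

/-- `(G1,a) ∘ v ∘ (G2,b)`: the disjoint union of `G1` and `G2` together with a new
vertex (`none`) joined to exactly `a` and `b`. -/
def connectViaVertex {V1 V2 : Type*} (G1 : SimpleGraph V1) (G2 : SimpleGraph V2)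
    (a : V1) (b : V2) : SimpleGraph (Option (V1 ⊕ V2)) where
  Adj x y := match x, y with
    | some (.inl u), some (.inl v) => G1.Adj u v
    | some (.inr u), some (.inr v) => G2.Adj u v
    | none, some (.inl u) => u = a
    | some (.inl u), none => u = a
    | none, some (.inr u) => u = b
    | some (.inr u), none => u = b
    | _, _ => False
  symm := by
    constructor
    rintro (_ | (u | u)) (_ | (v | v)) h
    all_goals first
      | exact h.elim
      | exact h
      | exact G1.adj_symm h
      | exact G2.adj_symm h
  loopless := by
    constructor
    rintro (_ | (u | u)) h
    · exact h.elim
    · exact G1.irrefl h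
    · exact G2.irrefl h

/-! Deleting the `c` leaves of `C(a, b, c)` by a Schur complement gives
`Φ(C(a, b, c)) = x ^ c * (P (a + b + 1) - (c / x) * P a * P b)`, where `P m = Φ(P_m)`. Both
caterpillars have a spine of `ℓ + r + 1` vertices, so their difference is
`k x ^ (k - 1) * (P ℓ * P r - P (ℓ + 1) * P (r - 1)) = k x ^ (k - 1) * P (ℓ - r)`, by a
Chebyshev-type identity coming from `P (m + 2) = x * P (m + 1) - P m`; the same recurrence gives
`0 < P m < P (m + 1)` for `x ≥ 2`. -/

lemma Phi_eq_det {V : Type*} [Fintype V] [DecidableEq V] (G : SimpleGraph V) (x : ℝ) :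
    Phi G x = (x • (1 : Matrix V V ℝ) - G.adjMatrix ℝ).det := by
  rw [Phi, Matrix.charpoly, ← Polynomial.coe_evalRingHom, RingHom.map_det]
  congr 1
  ext i j
  by_cases h : i = j
  · subst h
    simp [Matrix.charmatrix_apply_eq]
  · simp [Matrix.charmatrix_apply_ne _ _ _ h, Matrix.one_apply_ne h, apply_ite]

lemma smul_one_sub_adjMatrix_apply {R V : Type*} [Ring R] [DecidableEq V] (G : SimpleGraph V)
    [DecidableRel G.Adj] (x : R) (u v : V) :
    (x • (1 : Matrix V V R) - G.adjMatrix R) u v =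
      if u = v then x else if G.Adj u v then -1 else 0 := by
  by_cases h : u = v
  · subst h; simp
  · simp [Matrix.one_apply_ne h, h, neg_ite]

lemma det_sub_single_self {R : Type*} [CommRing R] {n : ℕ}
    (A : Matrix (Fin (n + 1)) (Fin (n + 1)) R) (i : Fin (n + 1)) (t : R) :
    (A - Matrix.single i i t).det = A.det - t * (A.submatrix i.succAbove i.succAbove).det := by
  have hrow : A - Matrix.single i i t = A.updateRow i (A i + (-t) • Pi.single i 1) := by
    ext u v
    by_cases hu : u = i
    · subst hu; simp [Matrix.single_apply, Pi.single_apply, eq_comm, sub_eq_add_neg]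
    · simp [hu, Ne.symm hu]
  rw [hrow, Matrix.det_updateRow_add, Matrix.updateRow_eq_self, Matrix.det_updateRow_smul,
    ← Matrix.adjugate_apply, Matrix.adjugate_fin_succ_eq_det_submatrix, ← two_mul, pow_mul]
  simp [sub_eq_add_neg]

def pathCharMatrix (x : ℝ) (m : ℕ) : Matrix (Fin m) (Fin m) ℝ := Matrix.of fun i j =>
  if (i : ℕ) = j then x else if (i : ℕ) + 1 = j ∨ (j : ℕ) + 1 = i then -1 else 0

lemma smul_one_sub_adjMatrix_pathG (x : ℝ) (m : ℕ) :
    x • (1 : Matrix (Fin m) (Fin m) ℝ) - (pathG m).adjMatrix ℝ = pathCharMatrix x m := by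
  ext i j
  rw [smul_one_sub_adjMatrix_apply]
  simp only [pathG, SimpleGraph.fromRel_adj, pathCharMatrix, Matrix.of_apply, Fin.ext_iff]
  split_ifs <;> first | rfl | omega

lemma Phi_pathG (x : ℝ) (m : ℕ) : Phi (pathG m) x = (pathCharMatrix x m).det := by
  rw [Phi_eq_det, smul_one_sub_adjMatrix_pathG]

lemma Phi_pathG_zero (x : ℝ) : Phi (pathG 0) x = 1 := by
  rw [Phi_pathG, Matrix.det_isEmpty]

lemma Phi_pathG_one (x : ℝ) : Phi (pathG 1) x = x := by
  rw [Phi_pathG, Matrix.det_unique]; simp [pathCharMatrix]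

lemma pathCharMatrix_submatrix_succ (x : ℝ) (m : ℕ) :
    (pathCharMatrix x (m + 1)).submatrix Fin.succ Fin.succ = pathCharMatrix x m := by
  ext i j
  simp only [pathCharMatrix, Matrix.submatrix_apply, Matrix.of_apply, Fin.val_succ]
  split_ifs <;> first | rfl | omega

lemma Phi_pathG_add_two (x : ℝ) (m : ℕ) :
    Phi (pathG (m + 2)) x = x * Phi (pathG (m + 1)) x - Phi (pathG m) x := by
  have hminor : ((pathCharMatrix x (m + 2)).submatrix Fin.succ (Fin.succAbove 1)).det =
      -Phi (pathG m) x := by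
    have hcorner : ((pathCharMatrix x (m + 2)).submatrix Fin.succ (Fin.succAbove 1)).submatrix
        Fin.succ Fin.succ = pathCharMatrix x m := by
      ext i j
      simp only [pathCharMatrix, Matrix.submatrix_apply, Matrix.of_apply,
        Fin.one_succAbove_succ, Fin.val_succ]
      split_ifs <;> first | rfl | omega
    rw [Matrix.det_succ_column_zero, Fin.sum_univ_succ, Finset.sum_eq_zero, Fin.succAbove_zero,
      hcorner, Phi_pathG]
    · simp [pathCharMatrix]
    · intro i _
      simp [pathCharMatrix]
  rw [Phi_pathG, Matrix.det_succ_row_zero, Fin.sum_univ_succ, Fin.sum_univ_succ,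
    Finset.sum_eq_zero, Fin.succAbove_zero, pathCharMatrix_submatrix_succ, ← Phi_pathG,
    Fin.succ_zero_eq_one, hminor]
  · simp [pathCharMatrix]
    ring
  · intro j _
    simp [pathCharMatrix]

lemma Phi_pathG_pos {x : ℝ} (hx : 2 ≤ x) (m : ℕ) : 0 < Phi (pathG m) x := by
  suffices ∀ m, 0 < Phi (pathG m) x ∧ Phi (pathG m) x < Phi (pathG (m + 1)) x from (this m).1
  intro m
  induction m using Nat.twoStepInduction with
  | zero => rw [Phi_pathG_zero, Phi_pathG_one]; constructor <;> linarith
  | one =>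
    rw [Phi_pathG_add_two, Phi_pathG_one, Phi_pathG_zero]
    constructor <;> nlinarith
  | more m _ ih =>
    obtain ⟨hpos, hlt⟩ := ih
    rw [Phi_pathG_add_two x (m + 1)]
    constructor <;> nlinarith

lemma Phi_pathG_mul_sub_mul (x : ℝ) (b c : ℕ) :
    Phi (pathG (b + c + 1)) x * Phi (pathG (b + 1)) x
      - Phi (pathG (b + c + 2)) x * Phi (pathG b) x = Phi (pathG c) x := by
  induction b with
  | zero => rw [Phi_pathG_zero, Phi_pathG_one, zero_add, Phi_pathG_add_two]; ring
  | succ b ih =>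
    rw [← ih, show b + 1 + c + 2 = b + c + 1 + 2 by omega,
      show b + 1 + c + 1 = b + c + 2 by omega, Phi_pathG_add_two x b,
      Phi_pathG_add_two x (b + c + 1)]
    ring

lemma pathCharMatrix_submatrix_succAbove (x : ℝ) (a b : ℕ) :
    (pathCharMatrix x (a + b + 1)).submatrix
        ((⟨a, by omega⟩ : Fin (a + b + 1)).succAbove ∘ finSumFinEquiv)
        ((⟨a, by omega⟩ : Fin (a + b + 1)).succAbove ∘ finSumFinEquiv) =
      Matrix.fromBlocks (pathCharMatrix x a) 0 0 (pathCharMatrix x b) := by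
  have hleft (i : Fin a) :
      ((⟨a, by omega⟩ : Fin (a + b + 1)).succAbove (finSumFinEquiv (.inl i)) : ℕ) = i := by
    rw [Fin.succAbove_of_castSucc_lt _ _ (by simp [Fin.lt_def])]; simp
  have hright (j : Fin b) :
      ((⟨a, by omega⟩ : Fin (a + b + 1)).succAbove (finSumFinEquiv (.inr j)) : ℕ) =
        a + j + 1 := by
    rw [Fin.succAbove_of_le_castSucc _ _ (by simp [Fin.le_def])]; simp
  ext (i | i) (j | j) <;>
  simp only [pathCharMatrix, Matrix.submatrix_apply, Function.comp_apply, Matrix.of_apply,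
    hleft, hright, Matrix.fromBlocks_apply₁₁, Matrix.fromBlocks_apply₁₂,
    Matrix.fromBlocks_apply₂₁, Matrix.fromBlocks_apply₂₂, Matrix.zero_apply] <;>
  split_ifs <;> first | rfl | omega

lemma det_pathCharMatrix_submatrix_succAbove (x : ℝ) (a b : ℕ) :
    ((pathCharMatrix x (a + b + 1)).submatrix (⟨a, by omega⟩ : Fin (a + b + 1)).succAbove
        (⟨a, by omega⟩ : Fin (a + b + 1)).succAbove).det =
      Phi (pathG a) x * Phi (pathG b) x := by
  rw [← Matrix.det_submatrix_equiv_self finSumFinEquiv, Matrix.submatrix_submatrix,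
    pathCharMatrix_submatrix_succAbove, Matrix.det_fromBlocks_zero₂₁, Phi_pathG, Phi_pathG]

def caterpillarEquiv (a b c : ℕ) : Fin (a + b + 1) ⊕ Fin c ≃ Fin (a + b + c + 1) :=
  finSumFinEquiv.trans (finCongr (by omega))

def hubColumn (a b c : ℕ) : Matrix (Fin (a + b + 1)) (Fin c) ℝ :=
  Matrix.of fun i _ => if (i : ℕ) = a then -1 else 0

lemma smul_one_sub_adjMatrix_caterpillar_submatrix (x : ℝ) (a b c : ℕ) :
    (x • (1 : Matrix _ _ ℝ) - (caterpillar a b c).adjMatrix ℝ).submatrix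
        (caterpillarEquiv a b c) (caterpillarEquiv a b c) =
      Matrix.fromBlocks (pathCharMatrix x (a + b + 1)) (hubColumn a b c)
        (hubColumn a b c).transpose (x • 1) := by
  ext (i | i) (j | j) <;>
  simp only [Matrix.submatrix_apply, smul_one_sub_adjMatrix_apply] <;>
  simp only [caterpillar, SimpleGraph.fromRel_adj, ne_eq, Fin.ext_iff, caterpillarEquiv,
    Equiv.trans_apply, finSumFinEquiv_apply_left, finSumFinEquiv_apply_right, finCongr_apply,
    Fin.val_cast, Fin.val_castAdd, Fin.val_natAdd, Matrix.fromBlocks_apply₁₁,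
    Matrix.fromBlocks_apply₁₂, Matrix.fromBlocks_apply₂₁, Matrix.fromBlocks_apply₂₂,
    pathCharMatrix, hubColumn, Matrix.of_apply, Matrix.transpose_apply, Matrix.smul_apply,
    Matrix.one_apply, smul_eq_mul] <;>
  split_ifs <;> first | rfl | omega | simp

lemma Phi_caterpillar {x : ℝ} (hx : x ≠ 0) (a b c : ℕ) :
    Phi (caterpillar a b c) x =
      x ^ c * (Phi (pathG (a + b + 1)) x - c / x * (Phi (pathG a) x * Phi (pathG b) x)) := by
  let _ : Invertible (x • (1 : Matrix (Fin c) (Fin c) ℝ)) :=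
    ⟨x⁻¹ • 1, by simp [smul_smul, hx], by simp [smul_smul, hx]⟩
  have hschur : hubColumn a b c * ⅟(x • (1 : Matrix (Fin c) (Fin c) ℝ)) *
      (hubColumn a b c).transpose = Matrix.single ⟨a, by omega⟩ ⟨a, by omega⟩ (c / x) := by
    rw [show ⅟(x • (1 : Matrix (Fin c) (Fin c) ℝ)) = x⁻¹ • 1 from rfl, Matrix.mul_smul,
      Matrix.mul_one, Matrix.smul_mul]
    ext i j
    simp only [hubColumn, Matrix.smul_apply, Matrix.mul_apply, Matrix.of_apply,
      Matrix.transpose_apply, Matrix.single_apply, Fin.ext_iff]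
    split_ifs <;> first | omega | simp [div_eq_inv_mul]
  rw [Phi_eq_det, ← Matrix.det_submatrix_equiv_self (caterpillarEquiv a b c),
    smul_one_sub_adjMatrix_caterpillar_submatrix, Matrix.det_fromBlocks₂₂, hschur,
    det_sub_single_self, det_pathCharMatrix_submatrix_succAbove, ← Phi_pathG, Matrix.det_smul,
    Matrix.det_one]
  simp

/-- For `ℓ ≥ r ≥ 1`, `k ≥ 1` and `x > 2`, `Φ(C(ℓ+1, r−1, k), x) > Φ(C(ℓ, r, k), x)`. -/
theorem stmt_6 (l r k : ℕ) (hr : 1 ≤ r) (hrl : r ≤ l) (hk : 1 ≤ k)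
    (x : ℝ) (hx : 2 < x) :
    Phi (caterpillar l r k) x < Phi (caterpillar (l + 1) (r - 1) k) x := by
  obtain ⟨s, rfl⟩ : ∃ s, r = s + 1 := ⟨r - 1, by omega⟩
  obtain ⟨t, rfl⟩ : ∃ t, l = s + t + 1 := ⟨l - s - 1, by omega⟩
  have hx0 : x ≠ 0 := (zero_lt_two.trans hx).ne'
  rw [Phi_caterpillar hx0, Phi_caterpillar hx0, Nat.add_sub_cancel,
    show s + t + 1 + 1 + s + 1 = s + t + 1 + (s + 1) + 1 by omega,
    show s + t + 1 + 1 = s + t + 2 from rfl]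
  have hgap : 0 < x ^ k * (k / x) * Phi (pathG t) x := by
    have hP := Phi_pathG_pos hx.le t
    have hk' : (0 : ℝ) < k := by exact_mod_cast hk
    positivity
  have hdiff := Phi_pathG_mul_sub_mul x s t
  linear_combination hgap - x ^ k * (k / x) * hdiff

end
end

section
/- Let G and G' be finite simple graphs on the same number n of vertices. If λ1(G') > λ2(G) and Φ(G', λ2(G)) > 0, then λ2(G') > λ2(G). -/
open Classical
attribute [local instance] Classical.propDecidable

noncomputable section

/-! Since `Φ(H, t) = ∏ (t - λᵢ(H))`, for `λ₂(H) ≤ t < λ₁(H)` exactly the factor `t - λ₁(H)` is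
negative and all the others are nonnegative, so `Φ(H, t) ≤ 0`. -/

theorem List.exists_eq_append_pair {α : Type*} {L : List α} (h : 2 ≤ L.length) :
    ∃ l b c, L = l ++ [b, c] := by
  obtain ⟨b, c, hbc⟩ : ∃ b c, L.drop (L.length - 2) = [b, c] :=
    List.length_eq_two.1 (by rw [List.length_drop]; omega)
  exact ⟨L.take (L.length - 2), b, c, by rw [← hbc, List.take_append_drop]⟩

theorem List.prod_map_sub_nonpos_of_pairwise_le {l : List ℝ} {b c t : ℝ}
    (hl : (l ++ [b, c]).Pairwise (· ≤ ·)) (hb : b ≤ t) (hc : t < c) :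
    ((l ++ [b, c]).map (t - ·)).prod ≤ 0 := by
  have hle : ∀ x ∈ l, 0 ≤ t - x := fun x hx =>
    sub_nonneg.2 ((List.pairwise_append.1 hl).2.2 x hx b (by simp) |>.trans hb)
  have hprod : 0 ≤ (l.map (t - ·)).prod := List.prod_nonneg (List.forall_mem_map.2 hle)
  simp only [List.map_append, List.prod_append, List.map_cons, List.map_nil, List.prod_cons,
    List.prod_nil, mul_one]
  exact mul_nonpos_of_nonneg_of_nonpos hprod
    (mul_nonpos_of_nonneg_of_nonpos (by linarith) (by linarith))

theorem Phi_eq_prod_eigList {V : Type*} [Fintype V] [DecidableEq V] (G : SimpleGraph V)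
    (t : ℝ) : Phi G t = ((eigList G).map (t - ·)).prod := by
  rw [Phi, (G.isHermitian_adjMatrix ℝ).charpoly_eq, Polynomial.eval_prod,
    Finset.prod_eq_multiset_prod, ← Multiset.prod_coe, ← Multiset.map_coe, eigList,
    Multiset.sort_eq, Multiset.map_map]
  simp

theorem eigList_length {V : Type*} [Fintype V] [DecidableEq V] (G : SimpleGraph V) :
    (eigList G).length = Fintype.card V := by
  rw [eigList, Multiset.length_sort, Multiset.card_map]
  rfl

theorem eigList_pairwise_le {V : Type*} [Fintype V] [DecidableEq V] (G : SimpleGraph V) :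
    (eigList G).Pairwise (· ≤ ·) :=
  Multiset.pairwise_sort _ _

theorem Phi_nonpos_of_lam_two_le_of_lt_lam_one {V : Type*} [Fintype V] [DecidableEq V]
    (G : SimpleGraph V) {t : ℝ} (h2 : lam G 2 ≤ t) (h1 : t < lam G 1) : Phi G t ≤ 0 := by
  have hcard : 2 ≤ Fintype.card V := by
    by_contra! hlt
    -- truncated subtraction: `card V - 2 = card V - 1`, so `λ₂` and `λ₁` are the same entry
    have : lam G 2 = lam G 1 := by simp only [lam]; congr 1; omega
    linarith
  obtain ⟨l, b, c, hl⟩ :=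
    List.exists_eq_append_pair ((eigList_length G).symm ▸ hcard : 2 ≤ (eigList G).length)
  have hlen : Fintype.card V = l.length + 2 := by
    rw [← eigList_length G, hl, List.length_append]; rfl
  have hb : lam G 2 = b := by simp [lam, hl, hlen]
  have hc : lam G 1 = c := by simp [lam, hl, hlen]
  rw [Phi_eq_prod_eigList, hl]
  exact List.prod_map_sub_nonpos_of_pairwise_le (hl ▸ eigList_pairwise_le G) (hb ▸ h2) (hc ▸ h1)

/-- If `λ₁(G') > λ₂(G)` and `Φ(G', λ₂(G)) > 0` for graphs on the same `n` vertices,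
then `λ₂(G') > λ₂(G)`. -/
theorem stmt_10 {n : ℕ} (G G' : SimpleGraph (Fin n))
    (h1 : lam G 2 < lam G' 1) (h2 : 0 < Phi G' (lam G 2)) :
    lam G 2 < lam G' 2 :=
  lt_of_not_ge fun h => h2.not_ge (Phi_nonpos_of_lam_two_le_of_lt_lam_one G' h h1)

end
end
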